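/- arXiv:2111.03614 — 5 statements merged into one kernel-verified Lean document; each statement's English description precedes it below -/
import Mathlib

section
/- Let x : Ω → ℝ^m and z : Ω → ℝ^n be random vectors on a probability space (Ω, μ) whose coordinate functions are measurable and square-integrable. Let R = (E_{zz})^{1/2} be the positive semidefinite square root of E_{zz}, and let R⁺ be a Moore–Penrose pseudoinverse of R. Then for every matrix P ∈ ℝ^{m×n}, ∫_Ω ‖x(ω) − P z(ω)‖₂² dμ(ω) = tr(E_{xx}) − ‖E_{xz} R⁺‖_F² + ‖E_{xz} R⁺ − P R‖_F². -/
open MeasureTheory Matrix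

/-- Second-moment matrix `E_{uv}` of two random vectors. -/
noncomputable def secondMoment {Ω : Type*} [MeasurableSpace Ω] (μ : Measure Ω)
    {a b : ℕ} (u : Ω → Fin a → ℝ) (v : Ω → Fin b → ℝ) : Matrix (Fin a) (Fin b) ℝ :=
  Matrix.of fun i j => ∫ ω, u ω i * v ω j ∂μ

/-- Mean square error `∫ ‖x(ω) − P z(ω)‖₂² dμ`. -/
noncomputable def mse {Ω : Type*} [MeasurableSpace Ω] (μ : Measure Ω)
    {m n : ℕ} (x : Ω → Fin m → ℝ) (z : Ω → Fin n → ℝ)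
    (P : Matrix (Fin m) (Fin n) ℝ) : ℝ :=
  ∫ ω, ∑ i, (x ω i - P.mulVec (z ω) i) ^ 2 ∂μ

/-- Squared Frobenius norm `‖A‖_F² = tr (A Aᵀ)`. -/
noncomputable def frobSq {a b : ℕ} (A : Matrix (Fin a) (Fin b) ℝ) : ℝ :=
  (A * Aᵀ).trace

/-- `B` is a Moore–Penrose pseudoinverse of `A`. -/
def IsMoorePenrose {a b : ℕ} (A : Matrix (Fin a) (Fin b) ℝ)
    (B : Matrix (Fin b) (Fin a) ℝ) : Prop :=
  A * B * A = A ∧ B * A * B = B ∧ (A * B)ᵀ = A * B ∧ (B * A)ᵀ = B * A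

/-- Product of two L² functions is integrable (polarization). -/
lemma int_mul_aux {Ω : Type*} [MeasurableSpace Ω] {μ : Measure Ω} {f g : Ω → ℝ}
    (hf : MemLp f 2 μ) (hg : MemLp g 2 μ) :
    Integrable (fun ω => f ω * g ω) μ := by
  have h1 := (hf.add hg).integrable_sq
  have h2 := (hf.sub hg).integrable_sq
  have key : (fun ω => f ω * g ω)
      = fun ω => ((f ω + g ω) ^ 2 - (f ω - g ω) ^ 2) * (4 : ℝ)⁻¹ := by
    funext ω; ring
  rw [key]
  exact (h1.sub h2).mul_const _

theorem mse_pythagorean_expansion {Ω : Type*} [MeasurableSpace Ω] (μ : Measure Ω)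
    [IsProbabilityMeasure μ] {m n : ℕ}
    (x : Ω → Fin m → ℝ) (z : Ω → Fin n → ℝ)
    (hxm : ∀ i, Measurable fun ω => x ω i) (hxL : ∀ i, MemLp (fun ω => x ω i) 2 μ)
    (hzm : ∀ j, Measurable fun ω => z ω j) (hzL : ∀ j, MemLp (fun ω => z ω j) 2 μ)
    (R : Matrix (Fin n) (Fin n) ℝ) (hRpsd : R.PosSemidef)
    (hRsq : R * R = secondMoment μ z z)
    (Rp : Matrix (Fin n) (Fin n) ℝ) (hRp : IsMoorePenrose R Rp)
    (P : Matrix (Fin m) (Fin n) ℝ) :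
    mse μ x z P =
      (secondMoment μ x x).trace - frobSq (secondMoment μ x z * Rp)
        + frobSq (secondMoment μ x z * Rp - P * R) := by
  have hxzI : ∀ i j, Integrable (fun ω => x ω i * z ω j) μ :=
    fun i j => int_mul_aux (hxL i) (hzL j)
  have hxxI : ∀ i i', Integrable (fun ω => x ω i * x ω i') μ :=
    fun i i' => int_mul_aux (hxL i) (hxL i')
  have hzzI : ∀ j k, Integrable (fun ω => z ω j * z ω k) μ :=
    fun j k => int_mul_aux (hzL j) (hzL k)
  -- Step 1: expand the mse.
  have expand : ∀ ω, (∑ i, (x ω i - P.mulVec (z ω) i) ^ 2)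
      = (∑ i, x ω i * x ω i)
        - 2 * (∑ i, ∑ j, P i j * (x ω i * z ω j))
        + (∑ i, ∑ j, ∑ k, P i j * P i k * (z ω j * z ω k)) := by
    intro ω
    have h1 : ∀ i, (x ω i - P.mulVec (z ω) i) ^ 2
        = x ω i * x ω i - 2 * (∑ j, P i j * (x ω i * z ω j))
          + ∑ j, ∑ k, P i j * P i k * (z ω j * z ω k) := by
      intro i
      have e1 : (∑ j, P i j * z ω j) * (∑ k, P i k * z ω k)
          = ∑ j, ∑ k, P i j * P i k * (z ω j * z ω k) := by
        rw [Finset.sum_mul_sum]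
        exact Finset.sum_congr rfl fun j _ => Finset.sum_congr rfl fun k _ => by ring
      have e2 : x ω i * (∑ j, P i j * z ω j) = ∑ j, P i j * (x ω i * z ω j) := by
        rw [Finset.mul_sum]
        exact Finset.sum_congr rfl fun j _ => by ring
      have hm : P.mulVec (z ω) i = ∑ j, P i j * z ω j := by
        simp [Matrix.mulVec, dotProduct]
      rw [hm]
      have : (x ω i - ∑ j, P i j * z ω j) ^ 2
          = x ω i * x ω i - 2 * (x ω i * (∑ j, P i j * z ω j))
            + (∑ j, P i j * z ω j) * (∑ k, P i k * z ω k) := by ring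
      rw [this, e1, e2]
    rw [Finset.sum_congr rfl (fun i _ => h1 i), Finset.sum_add_distrib,
      Finset.sum_sub_distrib, ← Finset.mul_sum]
  have I1 : Integrable (fun ω => ∑ i, x ω i * x ω i) μ :=
    integrable_finset_sum _ fun i _ => hxxI i i
  have I2 : Integrable (fun ω => ∑ i, ∑ j, P i j * (x ω i * z ω j)) μ :=
    integrable_finset_sum _ fun i _ =>
      integrable_finset_sum _ fun j _ => (hxzI i j).const_mul _
  have I3 : Integrable (fun ω => ∑ i, ∑ j, ∑ k, P i j * P i k * (z ω j * z ω k)) μ :=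
    integrable_finset_sum _ fun i _ => integrable_finset_sum _ fun j _ =>
      integrable_finset_sum _ fun k _ => (hzzI j k).const_mul _
  have hS2 : ∫ ω, (∑ i, ∑ j, P i j * (x ω i * z ω j)) ∂μ
      = ∑ i, ∑ j, P i j * ∫ ω, x ω i * z ω j ∂μ := by
    rw [integral_finset_sum _ (f := fun i ω => ∑ j, P i j * (x ω i * z ω j)) (fun i _ =>
      integrable_finset_sum _ fun j _ => (hxzI i j).const_mul _)]
    exact Finset.sum_congr rfl fun i _ => by
      rw [integral_finset_sum _ (f := fun j ω => P i j * (x ω i * z ω j))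
        (fun j _ => (hxzI i j).const_mul _)]
      exact Finset.sum_congr rfl fun j _ => integral_const_mul _ _
  have hS3 : ∫ ω, (∑ i, ∑ j, ∑ k, P i j * P i k * (z ω j * z ω k)) ∂μ
      = ∑ i, ∑ j, ∑ k, P i j * P i k * ∫ ω, z ω j * z ω k ∂μ := by
    rw [integral_finset_sum _ (fun i _ => integrable_finset_sum _ fun j _ =>
      integrable_finset_sum _ fun k _ => (hzzI j k).const_mul _)]
    refine Finset.sum_congr rfl fun i _ => ?_
    rw [integral_finset_sum _ (fun j _ =>
      integrable_finset_sum _ fun k _ => (hzzI j k).const_mul _)]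
    refine Finset.sum_congr rfl fun j _ => ?_
    rw [integral_finset_sum _ (fun k _ => (hzzI j k).const_mul _)]
    exact Finset.sum_congr rfl fun k _ => integral_const_mul _ _
  have key1 : mse μ x z P
      = (∑ i, ∫ ω, x ω i * x ω i ∂μ)
        - 2 * (∑ i, ∑ j, P i j * ∫ ω, x ω i * z ω j ∂μ)
        + (∑ i, ∑ j, ∑ k, P i j * P i k * ∫ ω, z ω j * z ω k ∂μ) := by
    unfold mse
    simp only [expand]
    have I2' : Integrable (fun ω => 2 * ∑ i, ∑ j, P i j * (x ω i * z ω j)) μ :=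
      I2.const_mul 2
    have I12 : Integrable (fun ω => (∑ i, x ω i * x ω i)
        - 2 * ∑ i, ∑ j, P i j * (x ω i * z ω j)) μ := I1.sub I2'
    rw [integral_add I12 I3, integral_sub I1 I2', integral_const_mul,
      integral_finset_sum _ (fun i _ => hxxI i i), hS2, hS3]
  -- trace identities
  have tr1 : (secondMoment μ x x).trace = ∑ i, ∫ ω, x ω i * x ω i ∂μ := by
    simp [Matrix.trace, secondMoment, Matrix.diag]
  have tr2 : (secondMoment μ x z * Pᵀ).trace
      = ∑ i, ∑ j, P i j * ∫ ω, x ω i * z ω j ∂μ := by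
    simp only [Matrix.trace, Matrix.diag, Matrix.mul_apply, Matrix.transpose_apply,
      secondMoment, Matrix.of_apply]
    exact Finset.sum_congr rfl fun i _ => Finset.sum_congr rfl fun j _ => by ring
  have tr3 : (P * secondMoment μ z z * Pᵀ).trace
      = ∑ i, ∑ j, ∑ k, P i j * P i k * ∫ ω, z ω j * z ω k ∂μ := by
    simp only [Matrix.trace, Matrix.diag, Matrix.mul_apply, Matrix.transpose_apply,
      secondMoment, Matrix.of_apply, Finset.sum_mul]
    refine Finset.sum_congr rfl fun i _ => ?_
    rw [Finset.sum_comm]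
    exact Finset.sum_congr rfl fun j _ => Finset.sum_congr rfl fun k _ => by ring
  -- Step 2: A * Rp * R = A, where A = secondMoment μ x z
  have hARpR : secondMoment μ x z * Rp * R = secondMoment μ x z := by
    have hM : R * (Rp * R - 1) = 0 := by
      rw [Matrix.mul_sub, ← Matrix.mul_assoc, hRp.1, Matrix.mul_one, sub_self]
    have hA0 : secondMoment μ x z * (Rp * R - 1) = 0 := by
      ext i j
      set v : Fin n → ℝ := fun k => (Rp * R - 1) k j with hv
      have hRv : R.mulVec v = 0 := by
        funext i'
        have := congrFun (congrFun hM i') j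
        simpa [Matrix.mulVec, dotProduct, Matrix.mul_apply, hv] using this
      have hEv : (secondMoment μ z z).mulVec v = 0 := by
        rw [← hRsq, ← Matrix.mulVec_mulVec, hRv, Matrix.mulVec_zero]
      set s : Ω → ℝ := fun ω => ∑ k, z ω k * v k with hs
      have hsL : MemLp s 2 μ :=
        memLp_finset_sum _ fun k _ => by
          simpa [mul_comm] using (hzL k).const_mul (v k)
      have hsq0 : ∫ ω, s ω ^ 2 ∂μ = 0 := by
        have e : ∀ ω, s ω ^ 2 = ∑ j', ∑ k, v j' * v k * (z ω j' * z ω k) := by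
          intro ω
          rw [hs]; simp only
          rw [sq, Finset.sum_mul_sum]
          exact Finset.sum_congr rfl fun j' _ => Finset.sum_congr rfl fun k _ => by ring
        simp only [e]
        rw [integral_finset_sum _ (fun j' _ =>
          integrable_finset_sum _ fun k _ => (hzzI j' k).const_mul _)]
        have he2 : ∀ j', (∫ ω, ∑ k, v j' * v k * (z ω j' * z ω k) ∂μ)
            = v j' * ((secondMoment μ z z).mulVec v j') := by
          intro j'
          rw [integral_finset_sum _ (fun k _ => (hzzI j' k).const_mul _)]
          simp only [Matrix.mulVec, dotProduct, secondMoment, Matrix.of_apply,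
            Finset.mul_sum]
          exact Finset.sum_congr rfl fun k _ => by
            rw [integral_const_mul]; ring
        rw [Finset.sum_congr rfl fun j' _ => he2 j']
        simp [hEv]
      have hz0 : s =ᵐ[μ] 0 := by
        have hae := (integral_eq_zero_iff_of_nonneg
          (fun ω => sq_nonneg (s ω)) hsL.integrable_sq).mp hsq0
        filter_upwards [hae] with ω hω
        exact pow_eq_zero_iff two_ne_zero |>.mp hω
      have hxi0 : (fun ω => x ω i * s ω) =ᵐ[μ] 0 := by
        filter_upwards [hz0] with ω hω
        simp [hω]
      have hentry : ((secondMoment μ x z * (Rp * R - 1) :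
            Matrix (Fin m) (Fin n) ℝ)) i j
          = ∑ k, (∫ ω, x ω i * z ω k ∂μ) * v k := by
        rw [Matrix.mul_apply]; rfl
      rw [hentry, Matrix.zero_apply]
      calc (∑ k, (∫ ω, x ω i * z ω k ∂μ) * v k)
          = ∑ k, ∫ ω, x ω i * z ω k * v k ∂μ :=
            Finset.sum_congr rfl fun k _ => (integral_mul_const _ _).symm
        _ = ∫ ω, ∑ k, x ω i * z ω k * v k ∂μ :=
            (integral_finset_sum _ fun k _ => (hxzI i k).mul_const _).symm
        _ = ∫ ω, x ω i * s ω ∂μ := by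
            refine integral_congr_ae (Filter.Eventually.of_forall fun ω => ?_)
            rw [hs]; simp only [Finset.mul_sum]
            exact Finset.sum_congr rfl fun k _ => by ring
        _ = 0 := by rw [integral_congr_ae hxi0]; simp
    have hstep : secondMoment μ x z * Rp * R
        = secondMoment μ x z * (Rp * R - 1) + secondMoment μ x z := by
      rw [Matrix.mul_sub, Matrix.mul_one, Matrix.mul_assoc, sub_add_cancel]
    rw [hstep, hA0, zero_add]
  -- Step 3: trace algebra
  have hRT : Rᵀ = R := by simpa using hRpsd.1.eq
  have hcross : ((secondMoment μ x z * Rp) * (P * R)ᵀ).trace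
      = (secondMoment μ x z * Pᵀ).trace := by
    rw [Matrix.transpose_mul, hRT, ← Matrix.mul_assoc, hARpR]
  have hcross' : ((P * R) * (secondMoment μ x z * Rp)ᵀ).trace
      = (secondMoment μ x z * Pᵀ).trace := by
    rw [← Matrix.trace_transpose ((P * R) * (secondMoment μ x z * Rp)ᵀ),
      Matrix.transpose_mul, Matrix.transpose_transpose, hcross]
  have hlast : ((P * R) * (P * R)ᵀ).trace = (P * secondMoment μ z z * Pᵀ).trace := by
    rw [Matrix.transpose_mul, hRT, Matrix.mul_assoc P R (R * Pᵀ),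
      ← Matrix.mul_assoc R R Pᵀ, hRsq, ← Matrix.mul_assoc]
  have hfrob : frobSq (secondMoment μ x z * Rp - P * R)
      = frobSq (secondMoment μ x z * Rp) - 2 * (secondMoment μ x z * Pᵀ).trace
        + (P * secondMoment μ z z * Pᵀ).trace := by
    unfold frobSq
    rw [Matrix.transpose_sub, Matrix.sub_mul, Matrix.mul_sub, Matrix.mul_sub,
      Matrix.trace_sub, Matrix.trace_sub, Matrix.trace_sub, hcross, hcross', hlast]
    ring
  rw [key1, ← tr1, ← tr2, ← tr3, hfrob]
  ring
end

section
/- Let Q ∈ ℝ^{m×k}, G ∈ ℝ^{s×k}, and let r be a natural number. Then there exists a matrix P̂ ∈ ℝ^{m×s} with rank P̂ ≤ r such that for every matrix P ∈ ℝ^{m×s} with rank P ≤ r one has ‖Q − P̂ G‖_F ≤ ‖Q − P G‖_F; that is, the rank-constrained least-squares problem min_{rank P ≤ r} ‖Q − P G‖_F attains its minimum. -/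
open Matrix

/-- Frobenius norm of a matrix. -/
noncomputable def frobNorm {a b : ℕ} (A : Matrix (Fin a) (Fin b) ℝ) : ℝ :=
  Real.sqrt (frobSq A)

open Module Submodule Set



lemma rank_submatrix_le_gen {a b n n' : ℕ} (A : Matrix (Fin a) (Fin b) ℝ)
    (f : Fin n → Fin a) (g : Fin n' → Fin b) : (A.submatrix f g).rank ≤ A.rank := by
  classical
  rw [Matrix.rank_eq_finrank_span_cols, Matrix.rank_eq_finrank_span_cols]
  have hsub : Set.range (A.submatrix f g)ᵀ ⊆ (LinearMap.funLeft ℝ ℝ f) '' (Set.range Aᵀ) := by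
    rintro _ ⟨j, rfl⟩
    exact ⟨Aᵀ (g j), ⟨g j, rfl⟩, rfl⟩
  calc finrank ℝ (span ℝ (Set.range (A.submatrix f g)ᵀ))
      ≤ finrank ℝ (span ℝ ((LinearMap.funLeft ℝ ℝ f) '' (Set.range Aᵀ))) :=
        Submodule.finrank_mono (span_mono hsub)
    _ = finrank ℝ (Submodule.map (LinearMap.funLeft ℝ ℝ f) (span ℝ (Set.range Aᵀ))) := by
        rw [Submodule.span_image]
    _ ≤ finrank ℝ (span ℝ (Set.range Aᵀ)) := Submodule.finrank_map_le _ _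

lemma exists_indep_cols {a b : ℕ} (A : Matrix (Fin a) (Fin b) ℝ) {n : ℕ} (h : n ≤ A.rank) :
    ∃ g : Fin n → Fin b, LinearIndependent ℝ (fun j => Aᵀ (g j)) := by
  classical
  rw [Matrix.rank_eq_finrank_span_cols] at h
  obtain ⟨t, hts, hspan, hli⟩ := exists_linearIndependent ℝ (Set.range Aᵀ)
  have htfin : t.Finite := (Set.finite_range Aᵀ).subset hts
  haveI := htfin.fintype
  have hcard : n ≤ Fintype.card t := by
    have := finrank_span_set_eq_card hli
    rw [hspan] at this
    rw [← Set.toFinset_card]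
    have h' : n ≤ finrank ℝ (span ℝ (Set.range Aᵀ)) := h
    omega
  obtain ⟨e⟩ : Nonempty (Fin n ↪ t) :=
    Function.Embedding.nonempty_of_card_le (by simpa using hcard)
  have hmem : ∀ j : Fin n, ((e j : t) : Fin a → ℝ) ∈ Set.range Aᵀ := fun j => hts (e j).2
  choose g hg using fun j => hmem j
  refine ⟨g, ?_⟩
  have : (fun j => Aᵀ (g j)) = (fun x : t => (x : Fin a → ℝ)) ∘ e := by
    funext j; simp [hg j]
  rw [this]
  exact hli.comp e e.injective

lemma isClosed_rank_le (a b r : ℕ) :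
    IsClosed {A : Matrix (Fin a) (Fin b) ℝ | A.rank ≤ r} := by
  classical
  rw [← isOpen_compl_iff]
  have hset : {A : Matrix (Fin a) (Fin b) ℝ | A.rank ≤ r}ᶜ =
      ⋃ (f : Fin (r+1) → Fin a) (g : Fin (r+1) → Fin b),
        {A | (A.submatrix f g).det ≠ 0} := by
    ext A
    simp only [Set.mem_compl_iff, Set.mem_setOf_eq, not_le, Set.mem_iUnion]
    constructor
    · intro hA
      obtain ⟨g, hg⟩ := exists_indep_cols A (Nat.succ_le_of_lt hA)
      set A1 := A.submatrix (id : Fin a → Fin a) g with hA1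
      have hcols : (fun j => A1ᵀ j) = fun j => Aᵀ (g j) := by
        funext j; funext i; rfl
      have hrank1 : A1.rank = r + 1 := by
        rw [Matrix.rank_eq_finrank_span_cols]
        have : LinearIndependent ℝ (fun j => A1ᵀ j) := by rw [hcols]; exact hg
        have := finrank_span_eq_card this
        have h' : finrank ℝ (span ℝ (Set.range fun j => A1ᵀ j)) = r + 1 := by simpa using this
        exact h'
      have h2 : r + 1 ≤ A1ᵀ.rank := by rw [Matrix.rank_transpose]; omega
      obtain ⟨f, hf⟩ := exists_indep_cols A1ᵀ h2
      refine ⟨f, g, ?_⟩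
      have hrows : (fun i => (A.submatrix f g) i) = fun i => A1ᵀᵀ (f i) := by
        funext i; funext j; rfl
      have hunit : IsUnit (A.submatrix f g) := by
        rw [← Matrix.linearIndependent_rows_iff_isUnit]
        show LinearIndependent ℝ (fun i => (A.submatrix f g) i)
        rw [hrows]
        simpa using hf
      have := (Matrix.isUnit_iff_isUnit_det _).mp hunit
      exact this.ne_zero
    · rintro ⟨f, g, hdet⟩
      have hunit : IsUnit (A.submatrix f g) :=
        (Matrix.isUnit_iff_isUnit_det _).mpr (isUnit_iff_ne_zero.mpr hdet)
      have h1 : (A.submatrix f g).rank = r + 1 := by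
        rw [Matrix.rank_of_isUnit _ hunit]; simp
      have := rank_submatrix_le_gen A f g
      omega
  rw [hset]
  refine isOpen_iUnion fun f => isOpen_iUnion fun g => ?_
  have hc : Continuous fun A : Matrix (Fin a) (Fin b) ℝ => (A.submatrix f g).det :=
    (continuous_id.matrix_submatrix f g).matrix_det
  exact isOpen_ne.preimage hc

lemma exists_ginv {s k : ℕ} (G : Matrix (Fin s) (Fin k) ℝ) :
    ∃ H : Matrix (Fin k) (Fin s) ℝ, G * H * G = G := by
  classical
  set f := G.mulVecLin with hf
  obtain ⟨g₀, hg₀⟩ := f.rangeRestrict.exists_rightInverse_of_surjective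
    (LinearMap.range_rangeRestrict f)
  obtain ⟨q, hq⟩ := (LinearMap.range f).exists_isCompl
  set π := (LinearMap.range f).linearProjOfIsCompl q hq with hπ
  set ψ := g₀.comp π with hψ
  refine ⟨LinearMap.toMatrix' ψ, ?_⟩
  apply Matrix.toLin'.injective
  refine LinearMap.ext fun x => ?_
  simp only [Matrix.toLin'_mul, LinearMap.comp_apply]
  have h1 : Matrix.toLin' (LinearMap.toMatrix' ψ) = ψ := Matrix.toLin'_toMatrix' ψ
  have h2 : Matrix.toLin' G = f := rfl
  rw [h2, h1]
  have h3 : π (f x) = f.rangeRestrict x := by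
    have : (f x) = ((f.rangeRestrict x : LinearMap.range f) : Fin s → ℝ) := rfl
    rw [this]
    exact Submodule.linearProjOfIsCompl_apply_left hq _
  simp only [hψ, LinearMap.comp_apply, h3]
  have h4 : f (g₀ (f.rangeRestrict x)) = f x := by
    have := LinearMap.congr_fun hg₀ (f.rangeRestrict x)
    have h5 : f.rangeRestrict (g₀ (f.rangeRestrict x)) = f.rangeRestrict x := this
    have := congrArg (Subtype.val) h5
    simpa using this
  exact h4


lemma frobSq_eq {a b : ℕ} (A : Matrix (Fin a) (Fin b) ℝ) :
    frobSq A = ∑ i, ∑ j, (A i j) ^ 2 := by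
  simp [frobSq, Matrix.trace, Matrix.mul_apply, Matrix.diag, sq]

lemma sq_entry_le_frobSq {a b : ℕ} (A : Matrix (Fin a) (Fin b) ℝ) (i : Fin a) (j : Fin b) :
    (A i j) ^ 2 ≤ frobSq A := by
  rw [frobSq_eq]
  have h1 : (A i j) ^ 2 ≤ ∑ j', (A i j') ^ 2 :=
    Finset.single_le_sum (f := fun j' => (A i j') ^ 2) (fun j' _ => sq_nonneg _)
      (Finset.mem_univ j)
  refine h1.trans ?_
  exact Finset.single_le_sum (f := fun i' => ∑ j', (A i' j') ^ 2)
    (fun i' _ => Finset.sum_nonneg fun j' _ => sq_nonneg _) (Finset.mem_univ i)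

lemma abs_entry_le_frobNorm {a b : ℕ} (A : Matrix (Fin a) (Fin b) ℝ) (i : Fin a) (j : Fin b) :
    |A i j| ≤ Real.sqrt (frobSq A) := by
  rw [← Real.sqrt_sq_eq_abs]
  exact Real.sqrt_le_sqrt (sq_entry_le_frobSq A i j)

lemma continuous_frobSq {a b : ℕ} : Continuous fun A : Matrix (Fin a) (Fin b) ℝ => frobSq A := by
  unfold frobSq
  exact (continuous_id.matrix_mul continuous_id.matrix_transpose).matrix_trace

theorem rank_constrained_least_squares_attained {m k s : ℕ}
    (Q : Matrix (Fin m) (Fin k) ℝ) (G : Matrix (Fin s) (Fin k) ℝ) (r : ℕ) :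
    ∃ Phat : Matrix (Fin m) (Fin s) ℝ, Phat.rank ≤ r ∧
      ∀ P : Matrix (Fin m) (Fin s) ℝ, P.rank ≤ r →
        frobNorm (Q - Phat * G) ≤ frobNorm (Q - P * G) := by
  classical
  obtain ⟨H, hH⟩ := exists_ginv G
  set S : Set (Matrix (Fin m) (Fin k) ℝ) := {X | ∃ P : Matrix (Fin m) (Fin s) ℝ, P.rank ≤ r ∧ X = P * G} with hS
  have hSalt : S = {X | (X * H).rank ≤ r} ∩ {X | X * H * G = X} := by
    ext X
    constructor
    · rintro ⟨P, hP, rfl⟩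
      constructor
      · have : P * G * H = P * (G * H) := Matrix.mul_assoc P G H
        rw [Set.mem_setOf_eq, this]
        exact (Matrix.rank_mul_le_left P (G * H)).trans hP
      · show P * G * H * G = P * G
        calc P * G * H * G = P * (G * H * G) := by
              rw [Matrix.mul_assoc, Matrix.mul_assoc, Matrix.mul_assoc]
          _ = P * G := by rw [hH]
    · rintro ⟨h1, h2⟩
      exact ⟨X * H, h1, h2.symm⟩
  have hSclosed : IsClosed S := by
    rw [hSalt]
    refine IsClosed.inter ?_ ?_
    · exact (isClosed_rank_le m s r).preimage (continuous_id.matrix_mul continuous_const)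
    · exact isClosed_eq ((continuous_id.matrix_mul continuous_const).matrix_mul continuous_const)
        continuous_id
  set g : Matrix (Fin m) (Fin k) ℝ → ℝ := fun X => frobSq (Q - X) with hg
  have hgcont : Continuous g := continuous_frobSq.comp (continuous_const.sub continuous_id)
  set T : Set (Matrix (Fin m) (Fin k) ℝ) := S ∩ {X | g X ≤ frobSq Q} with hT
  have h0S : (0 : Matrix (Fin m) (Fin k) ℝ) ∈ S := ⟨0, by simp, by simp⟩
  have h0T : (0 : Matrix (Fin m) (Fin k) ℝ) ∈ T := ⟨h0S, by simp [hg]⟩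
  have hTclosed : IsClosed T := hSclosed.inter (isClosed_le hgcont continuous_const)
  set R : ℝ := 2 * Real.sqrt (frobSq Q) with hR
  have hTsub : T ⊆ Set.univ.pi fun _ : Fin m => Set.univ.pi fun _ : Fin k => Set.Icc (-R) R := by
    rintro X ⟨-, hX2⟩
    intro i _ j _
    have h1 : |Q i j - X i j| ≤ Real.sqrt (frobSq (Q - X)) := by
      have := abs_entry_le_frobNorm (Q - X) i j
      simpa using this
    have h2 : Real.sqrt (frobSq (Q - X)) ≤ Real.sqrt (frobSq Q) := Real.sqrt_le_sqrt hX2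
    have h3 : |Q i j| ≤ Real.sqrt (frobSq Q) := abs_entry_le_frobNorm Q i j
    have h4 : |X i j| ≤ R := by
      have : |X i j| ≤ |Q i j - X i j| + |Q i j| := by
        have := abs_sub_abs_le_abs_sub (X i j) (Q i j)
        have h5 := abs_sub_comm (Q i j) (X i j)
        rw [abs_sub_comm] at this ⊢
        nlinarith [abs_nonneg (X i j), abs_sub (X i j) (Q i j)]
      calc |X i j| ≤ |Q i j - X i j| + |Q i j| := this
        _ ≤ Real.sqrt (frobSq Q) + Real.sqrt (frobSq Q) := add_le_add (h1.trans h2) h3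
        _ = R := by ring
    exact abs_le.mp h4
  have hKcomp : IsCompact (Set.univ.pi fun _ : Fin m => Set.univ.pi
      fun _ : Fin k => Set.Icc (-R) R : Set (Matrix (Fin m) (Fin k) ℝ)) :=
    isCompact_univ_pi fun _ => isCompact_univ_pi fun _ => isCompact_Icc
  have hTcomp : IsCompact T := hKcomp.of_isClosed_subset hTclosed hTsub
  obtain ⟨X₀, hX₀T, hX₀min⟩ := hTcomp.exists_isMinOn ⟨0, h0T⟩ hgcont.continuousOn
  obtain ⟨⟨Phat, hPhat, hX₀eq⟩, hX₀le⟩ := hX₀T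
  refine ⟨Phat, hPhat, fun P hP => ?_⟩
  have key : g X₀ ≤ g (P * G) := by
    by_cases hc : g (P * G) ≤ frobSq Q
    · exact hX₀min ⟨⟨P, hP, rfl⟩, hc⟩
    · have h6 : g X₀ ≤ frobSq Q := hX₀le
      push_neg at hc
      linarith
  rw [← hX₀eq]
  exact Real.sqrt_le_sqrt key
end

section
/- Let x̃ : Ω → ℝ^m and z : Ω → ℝ^n be random vectors on a probability space (Ω, μ) whose coordinate functions are measurable and square-integrable, and let B ∈ ℝ^{m×r} be a fixed matrix. Let B⁺ be a Moore–Penrose pseudoinverse of B and E_{zz}⁺ a Moore–Penrose pseudoinverse of E_{zz}. For an arbitrary matrix M ∈ ℝ^{n×n}, set Ŝ = B⁺ E_{x̃z} E_{zz}⁺ (I_n + M (I_n − E_{zz} E_{zz}⁺)). Then Ŝ minimizes the mean square error over all intermediate matrices: for every S ∈ ℝ^{r×n}, ∫_Ω ‖x̃(ω) − B Ŝ z(ω)‖₂² dμ(ω) ≤ ∫_Ω ‖x̃(ω) − B S z(ω)‖₂² dμ(ω). -/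
open MeasureTheory Matrix

section Aux

variable {Ω : Type*} [MeasurableSpace Ω] {μ : Measure Ω}

lemma aux_mul_int {f g : Ω → ℝ} (hf : MemLp f 2 μ) (hg : MemLp g 2 μ) :
    Integrable (fun ω => f ω * g ω) μ := by
  have h : MemLp (g • f) 1 μ := hf.smul hg
    (hpqr := ⟨by rw [← two_mul, ENNReal.mul_inv_cancel two_ne_zero
      ENNReal.ofNat_ne_top, inv_one]⟩)
  rw [memLp_one_iff_integrable] at h
  exact h.congr (ae_of_all μ fun ω => mul_comm (g ω) (f ω))

variable {n : ℕ} {z : Ω → Fin n → ℝ}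

lemma aux_comb (hzL : ∀ j, MemLp (fun ω => z ω j) 2 μ) (c : Fin n → ℝ) :
    MemLp (fun ω => ∑ j, c j * z ω j) 2 μ := by
  have h := memLp_finset_sum' (μ := μ) (p := 2) Finset.univ
    (f := fun j ω => c j * z ω j) (fun j _ => (hzL j).const_mul (c j))
  have h2 : (fun ω => ∑ j, c j * z ω j) = ∑ j : Fin n, fun ω => c j * z ω j := by
    funext ω; simp
  rw [h2]; exact h

/-- If `w` is in the kernel of `E_{zz}` then `⟨w, z⟩ = 0` a.e. -/
lemma aux_kernel (hzL : ∀ j, MemLp (fun ω => z ω j) 2 μ) (w : Fin n → ℝ)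
    (hw : (secondMoment μ z z).mulVec w = 0) :
    (fun ω => ∑ j, w j * z ω j) =ᵐ[μ] 0 := by
  set g : Ω → ℝ := fun ω => ∑ j, w j * z ω j with hg
  have hgL : MemLp g 2 μ := aux_comb hzL w
  have hint : Integrable (fun ω => g ω ^ 2) μ := hgL.integrable_sq
  have hterm : ∀ j k : Fin n, Integrable (fun ω => w j * z ω j * (w k * z ω k)) μ := by
    intro j k
    have := (aux_mul_int (hzL j) (hzL k)).const_mul (w j * w k)
    refine this.congr (ae_of_all μ fun ω => ?_)
    ring
  have hI : ∫ ω, g ω ^ 2 ∂μ = ∑ j, w j * (secondMoment μ z z).mulVec w j := by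
    have h1 : ∀ ω, g ω ^ 2 = ∑ j, ∑ k, w j * z ω j * (w k * z ω k) := by
      intro ω
      rw [sq, hg, Finset.sum_mul_sum]
    calc ∫ ω, g ω ^ 2 ∂μ = ∫ ω, ∑ j, ∑ k, w j * z ω j * (w k * z ω k) ∂μ := by
          simp_rw [h1]
      _ = ∑ j, ∑ k, ∫ ω, w j * z ω j * (w k * z ω k) ∂μ := by
          rw [integral_finset_sum _ fun j _ => integrable_finset_sum _ fun k _ => hterm j k]
          exact Finset.sum_congr rfl fun j _ => integral_finset_sum _ fun k _ => hterm j k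
      _ = ∑ j, ∑ k, w j * (secondMoment μ z z j k * w k) := by
          refine Finset.sum_congr rfl fun j _ => Finset.sum_congr rfl fun k _ => ?_
          rw [show (fun ω => w j * z ω j * (w k * z ω k))
              = fun ω => (w j * w k) * (z ω j * z ω k) by funext ω; ring,
            integral_const_mul, secondMoment]
          simp only [Matrix.of_apply]
          ring
      _ = ∑ j, w j * (secondMoment μ z z).mulVec w j := by
          refine Finset.sum_congr rfl fun j _ => ?_
          rw [Matrix.mulVec, dotProduct, Finset.mul_sum]
  rw [hw] at hI
  simp only [Pi.zero_apply, mul_zero, Finset.sum_const_zero] at hI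
  have hsq : (fun ω => g ω ^ 2) =ᵐ[μ] 0 :=
    (integral_eq_zero_iff_of_nonneg (fun ω => sq_nonneg _) hint).mp hI
  filter_upwards [hsq] with ω hω
  have : g ω ^ 2 = 0 := hω
  exact pow_eq_zero_iff two_ne_zero |>.mp this

end Aux

theorem optimal_intermediate_matrix {Ω : Type*} [MeasurableSpace Ω] (μ : Measure Ω)
    [IsProbabilityMeasure μ] {m n r : ℕ}
    (xt : Ω → Fin m → ℝ) (z : Ω → Fin n → ℝ)
    (hxm : ∀ i, Measurable fun ω => xt ω i) (hxL : ∀ i, MemLp (fun ω => xt ω i) 2 μ)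
    (hzm : ∀ j, Measurable fun ω => z ω j) (hzL : ∀ j, MemLp (fun ω => z ω j) 2 μ)
    (B : Matrix (Fin m) (Fin r) ℝ)
    (Bp : Matrix (Fin r) (Fin m) ℝ) (hBp : IsMoorePenrose B Bp)
    (Ezzp : Matrix (Fin n) (Fin n) ℝ) (hEzzp : IsMoorePenrose (secondMoment μ z z) Ezzp)
    (M : Matrix (Fin n) (Fin n) ℝ) :
    ∀ S : Matrix (Fin r) (Fin n) ℝ,
      mse μ xt z
          (B * (Bp * secondMoment μ xt z * Ezzp *
            (1 + M * (1 - secondMoment μ z z * Ezzp))))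
        ≤ mse μ xt z (B * S) := by
  intro S
  obtain ⟨hB1, hB2, hB3, hB4⟩ := hBp
  obtain ⟨hE1, hE2, hE3, hE4⟩ := hEzzp
  set Exz := secondMoment μ xt z with hExz
  set Ezz := secondMoment μ z z with hEzz
  set Sh : Matrix (Fin r) (Fin n) ℝ := Bp * Exz * Ezzp * (1 + M * (1 - Ezz * Ezzp)) with hSh
  -- Step 1: Exz * (Ezzp * Ezz) = Exz
  have hker : Exz * (1 - Ezzp * Ezz) = 0 := by
    have hEN : Ezz * (1 - Ezzp * Ezz) = 0 := by
      rw [Matrix.mul_sub, Matrix.mul_one, ← Matrix.mul_assoc, hE1, sub_self]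
    ext i j
    have hw : Ezz.mulVec (fun k => (1 - Ezzp * Ezz) k j) = 0 := by
      funext i'
      have := congrFun (congrFun hEN i') j
      simpa [Matrix.mul_apply, Matrix.mulVec, dotProduct] using this
    have hae := aux_kernel hzL (fun k => (1 - Ezzp * Ezz) k j) hw
    have hterm : ∀ k : Fin n, Integrable
        (fun ω => xt ω i * ((1 - Ezzp * Ezz) k j * z ω k)) μ := by
      intro k
      have := (aux_mul_int (hxL i) (hzL k)).const_mul ((1 - Ezzp * Ezz) k j)
      refine this.congr (ae_of_all μ fun ω => ?_); ring
    have key : ((Exz * (1 - Ezzp * Ezz) : Matrix (Fin m) (Fin n) ℝ)) i j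
        = ∫ ω, xt ω i * (∑ k, (1 - Ezzp * Ezz) k j * z ω k) ∂μ := by
      rw [Matrix.mul_apply]
      rw [show (fun ω => xt ω i * (∑ k, (1 - Ezzp * Ezz) k j * z ω k))
          = fun ω => ∑ k, xt ω i * ((1 - Ezzp * Ezz) k j * z ω k) by
          funext ω; rw [Finset.mul_sum]]
      rw [integral_finset_sum _ fun k _ => hterm k]
      refine Finset.sum_congr rfl fun k _ => ?_
      rw [show (fun ω => xt ω i * ((1 - Ezzp * Ezz) k j * z ω k))
          = fun ω => (1 - Ezzp * Ezz) k j * (xt ω i * z ω k) by funext ω; ring,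
        integral_const_mul, hExz, secondMoment]
      simp only [Matrix.of_apply]
      ring
    have key2 : ∫ ω, xt ω i * (∑ k, (1 - Ezzp * Ezz) k j * z ω k) ∂μ = ∫ ω, (0:ℝ) ∂μ := by
      refine integral_congr_ae ?_
      filter_upwards [hae] with ω hω
      have hω' : (∑ k, (1 - Ezzp * Ezz) k j * z ω k) = 0 := by simpa using hω
      rw [hω', mul_zero]
    show ((Exz * (1 - Ezzp * Ezz) : Matrix (Fin m) (Fin n) ℝ)) i j
        = (0 : Matrix (Fin m) (Fin n) ℝ) i j
    rw [key, key2, integral_zero]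
    rfl
  have hExzE : Exz * Ezzp * Ezz = Exz := by
    have h := hker
    rw [Matrix.mul_sub, Matrix.mul_one, sub_eq_zero] at h
    rw [Matrix.mul_assoc, ← h]
  -- Step 2: algebra
  have h0 : (1 + M * (1 - Ezz * Ezzp)) * Ezz = Ezz := by
    rw [Matrix.add_mul, Matrix.one_mul, Matrix.mul_assoc M, Matrix.sub_mul,
      Matrix.one_mul, hE1, sub_self, Matrix.mul_zero, add_zero]
  have hShEzz : Sh * Ezz = Bp * Exz := by
    rw [hSh, Matrix.mul_assoc (Bp * Exz * Ezzp), h0, Matrix.mul_assoc Bp Exz Ezzp,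
      Matrix.mul_assoc Bp (Exz * Ezzp) Ezz, hExzE]
  have hBtB : Bᵀ * (B * Bp) = Bᵀ := by
    rw [← hB3, ← Matrix.transpose_mul, hB1]
  have hK : Bᵀ * (Exz - B * Sh * Ezz) = 0 := by
    rw [Matrix.mul_assoc B Sh Ezz, hShEzz, ← Matrix.mul_assoc B Bp Exz, Matrix.mul_sub,
      ← Matrix.mul_assoc Bᵀ (B * Bp) Exz, hBtB, sub_self]
  -- Step 3: notation
  set D : Matrix (Fin m) (Fin n) ℝ := B * Sh - B * S with hD
  set K : Matrix (Fin m) (Fin n) ℝ := Exz - B * Sh * Ezz with hKdef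
  have hDK : ∑ i, ∑ j, D i j * K i j = 0 := by
    have hDt : Dᵀ * K = 0 := by
      rw [hD, ← Matrix.mul_sub, Matrix.transpose_mul, Matrix.mul_assoc, hK, Matrix.mul_zero]
    calc ∑ i, ∑ j, D i j * K i j = ∑ j, ∑ i, Dᵀ j i * K i j := by
          rw [Finset.sum_comm]; rfl
      _ = ∑ j, (Dᵀ * K) j j := by
          exact Finset.sum_congr rfl fun j _ => (Matrix.mul_apply).symm
      _ = 0 := by rw [hDt]; simp
  -- mulVec expansion
  have hmv : ∀ (P : Matrix (Fin m) (Fin n) ℝ) (i : Fin m) (ω : Ω),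
      P.mulVec (z ω) i = ∑ j, P i j * z ω j := by
    intro P i ω; rfl
  have hPe : ∀ (P : Matrix (Fin m) (Fin n) ℝ) (i : Fin m),
      MemLp (fun ω => xt ω i - P.mulVec (z ω) i) 2 μ := by
    intro P i
    have h1 : MemLp (fun ω => P.mulVec (z ω) i) 2 μ := by
      have := aux_comb (n := n) hzL (P i)
      simpa [hmv] using this
    exact (hxL i).sub h1
  have hdL : ∀ i : Fin m, MemLp (fun ω => D.mulVec (z ω) i) 2 μ := by
    intro i
    have := aux_comb (n := n) hzL (D i)
    simpa [hmv] using this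
  -- pointwise decomposition
  have hpt : ∀ ω, (∑ i, (xt ω i - (B * S).mulVec (z ω) i) ^ 2)
      = (∑ i, (xt ω i - (B * Sh).mulVec (z ω) i) ^ 2)
      + ((∑ i, 2 * ((xt ω i - (B * Sh).mulVec (z ω) i) * D.mulVec (z ω) i))
        + ∑ i, (D.mulVec (z ω) i) ^ 2) := by
    intro ω
    rw [← Finset.sum_add_distrib, ← Finset.sum_add_distrib]
    refine Finset.sum_congr rfl fun i _ => ?_
    have hsub : D.mulVec (z ω) i = (B * Sh).mulVec (z ω) i - (B * S).mulVec (z ω) i := by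
      rw [hD, Matrix.sub_mulVec]; rfl
    rw [hsub]; ring
  -- integrability
  have IntSq : ∀ (P : Matrix (Fin m) (Fin n) ℝ),
      Integrable (fun ω => ∑ i, (xt ω i - P.mulVec (z ω) i) ^ 2) μ :=
    fun P => integrable_finset_sum _ fun i _ => (hPe P i).integrable_sq
  have IntCross : Integrable
      (fun ω => ∑ i, 2 * ((xt ω i - (B * Sh).mulVec (z ω) i) * D.mulVec (z ω) i)) μ :=
    integrable_finset_sum _ fun i _ =>
      ((aux_mul_int (hPe (B * Sh) i) (hdL i)).const_mul 2)
  have IntQuad : Integrable (fun ω => ∑ i, (D.mulVec (z ω) i) ^ 2) μ :=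
    integrable_finset_sum _ fun i _ => (hdL i).integrable_sq
  -- the cross term vanishes
  have hcross : ∀ i : Fin m,
      ∫ ω, (xt ω i - (B * Sh).mulVec (z ω) i) * D.mulVec (z ω) i ∂μ
        = ∑ j, D i j * K i j := by
    intro i
    have he := hPe (B * Sh) i
    have hexp : (fun ω => (xt ω i - (B * Sh).mulVec (z ω) i) * D.mulVec (z ω) i)
        = fun ω => ∑ j, D i j * ((xt ω i - (B * Sh).mulVec (z ω) i) * z ω j) := by
      funext ω
      rw [hmv D i ω, Finset.mul_sum]
      exact Finset.sum_congr rfl fun j _ => by ring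
    rw [hexp, integral_finset_sum _ (fun j _ => by
      exact (aux_mul_int he (hzL j)).const_mul (D i j))]
    refine Finset.sum_congr rfl fun j _ => ?_
    rw [integral_const_mul]
    congr 1
    -- ∫ e_i z_j = K i j
    have hterm2 : ∀ k : Fin n, Integrable (fun ω => (B * Sh) i k * (z ω k * z ω j)) μ :=
      fun k => (aux_mul_int (hzL k) (hzL j)).const_mul _
    have hsplit : (fun ω => (xt ω i - (B * Sh).mulVec (z ω) i) * z ω j)
        = fun ω => xt ω i * z ω j - ∑ k, (B * Sh) i k * (z ω k * z ω j) := by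
      funext ω
      rw [hmv (B * Sh) i ω, sub_mul, Finset.sum_mul]
      congr 1
      exact Finset.sum_congr rfl fun k _ => by ring
    rw [hsplit, integral_sub (aux_mul_int (hxL i) (hzL j))
      (integrable_finset_sum _ fun k _ => hterm2 k),
      integral_finset_sum _ (fun k _ => hterm2 k)]
    have : ∀ k : Fin n, ∫ ω, (B * Sh) i k * (z ω k * z ω j) ∂μ
        = (B * Sh) i k * Ezz k j := by
      intro k
      rw [integral_const_mul, hEzz, secondMoment]
      simp only [Matrix.of_apply]
    simp only [this]
    rw [hKdef, Matrix.sub_apply, hExz, secondMoment, Matrix.mul_apply]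
    rfl
  -- final assembly
  have hquad : 0 ≤ ∫ ω, ∑ i, (D.mulVec (z ω) i) ^ 2 ∂μ :=
    integral_nonneg fun ω => Finset.sum_nonneg fun i _ => sq_nonneg _
  have hcross0 : ∫ ω, ∑ i, 2 * ((xt ω i - (B * Sh).mulVec (z ω) i) * D.mulVec (z ω) i) ∂μ
      = 0 := by
    rw [integral_finset_sum _ (fun i _ =>
      ((aux_mul_int (hPe (B * Sh) i) (hdL i)).const_mul 2))]
    calc ∑ i, ∫ ω, 2 * ((xt ω i - (B * Sh).mulVec (z ω) i) * D.mulVec (z ω) i) ∂μ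
        = ∑ i, 2 * ∑ j, D i j * K i j := by
          exact Finset.sum_congr rfl fun i _ => by rw [integral_const_mul, hcross i]
      _ = 2 * ∑ i, ∑ j, D i j * K i j := by rw [Finset.mul_sum]
      _ = 0 := by rw [hDK, mul_zero]
  have hmse : mse μ xt z (B * S) = mse μ xt z (B * Sh)
      + ((∫ ω, ∑ i, 2 * ((xt ω i - (B * Sh).mulVec (z ω) i) * D.mulVec (z ω) i) ∂μ)
        + ∫ ω, ∑ i, (D.mulVec (z ω) i) ^ 2 ∂μ) := by
    rw [mse, mse]
    have hcongr : (∫ ω, ∑ i, (xt ω i - (B * S).mulVec (z ω) i) ^ 2 ∂μ)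
        = ∫ ω, ((∑ i, (xt ω i - (B * Sh).mulVec (z ω) i) ^ 2)
          + ((∑ i, 2 * ((xt ω i - (B * Sh).mulVec (z ω) i) * D.mulVec (z ω) i))
            + ∑ i, (D.mulVec (z ω) i) ^ 2)) ∂μ :=
      integral_congr_ae (ae_of_all μ hpt)
    have IntCG : Integrable (fun ω =>
        (∑ i, 2 * ((xt ω i - (B * Sh).mulVec (z ω) i) * D.mulVec (z ω) i))
          + ∑ i, (D.mulVec (z ω) i) ^ 2) μ := IntCross.add IntQuad
    rw [hcongr, integral_add (IntSq (B * Sh)) IntCG, integral_add IntCross IntQuad]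
  rw [hmse, hcross0]
  linarith
end

section
/- Let p ∈ ℕ, and for each j let H ∈ ℝ^{m×k}, G_j ∈ ℝ^{s_j×k}, and r_j ∈ ℕ. Define φ(P_1,…,P_p) = ‖H − Σ_{j=1}^p P_j G_j‖_F² for P_j ∈ ℝ^{m×s_j}. Let (P^{(q)})_{q∈ℕ} be a sequence of p-tuples with rank P^{(q)}_j ≤ r_j for all q and j, satisfying the maximum-block-improvement property: for every q, every index j, and every Y ∈ ℝ^{m×s_j} with rank Y ≤ r_j, φ(P^{(q+1)}) ≤ φ(P^{(q)}_1,…,P^{(q)}_{j−1}, Y, P^{(q)}_{j+1},…,P^{(q)}_p). If a subsequence (P^{(q_s)}) converges (entrywise in each block) to a tuple P* = (P*_1,…,P*_p), then rank P*_j ≤ r_j for every j, and P* is a coordinate-wise minimum: for every j and every Y ∈ ℝ^{m×s_j} with rank Y ≤ r_j, φ(P*) ≤ φ(P*_1,…,P*_{j−1}, Y, P*_{j+1},…,P*_p). -/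
open Matrix Filter

-- det ≠ 0 from full rank, square matrix over ℝ
lemma det_ne_zero_of_rank_eq {n : ℕ} (M : Matrix (Fin n) (Fin n) ℝ)
    (h : M.rank = n) : M.det ≠ 0 := by
  intro hdet
  obtain ⟨v, hv, hMv⟩ := (Matrix.exists_mulVec_eq_zero_iff).2 hdet
  have hker : v ∈ LinearMap.ker M.mulVecLin := by
    simpa [Matrix.mulVecLin] using hMv
  have h1 : 0 < Module.finrank ℝ (LinearMap.ker M.mulVecLin) := by
    rw [Nat.pos_iff_ne_zero]
    intro h0
    rw [Submodule.finrank_eq_zero] at h0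
    rw [h0] at hker
    exact hv hker
  have h2 := LinearMap.finrank_range_add_finrank_ker M.mulVecLin
  have h3 : M.rank = Module.finrank ℝ (LinearMap.range M.mulVecLin) := rfl
  rw [h3] at h
  simp [Module.finrank_pi] at h2
  omega

lemma rank_le_of_tendsto {m n r : ℕ} (A : ℕ → Matrix (Fin m) (Fin n) ℝ)
    (B : Matrix (Fin m) (Fin n) ℝ) (hA : ∀ t, (A t).rank ≤ r)
    (h : Tendsto A atTop (nhds B)) : B.rank ≤ r := by
  by_contra hlt
  push_neg at hlt
  -- extract r+1 linearly independent columns of B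
  obtain ⟨b, hb_sub, hb_span, hb_li⟩ := exists_linearIndependent ℝ (Set.range Bᵀ)
  have hbfin : b.Finite := hb_li.setFinite
  haveI : Fintype b := hbfin.fintype
  have hcard : r + 1 ≤ b.toFinset.card := by
    have h1 := finrank_span_set_eq_card hb_li
    rw [hb_span, show Set.range Bᵀ = Set.range B.col from rfl, ← rank_eq_finrank_span_cols] at h1
    omega
  have hemb : Nonempty (Fin (r + 1) ↪ b) := by
    apply Function.Embedding.nonempty_of_card_le
    simpa using hcard
  obtain ⟨e⟩ := hemb
  have he_li : LinearIndependent ℝ (fun j : Fin (r + 1) => ((e j : b) : Fin m → ℝ)) :=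
    hb_li.comp e e.injective
  have hf : ∀ j : Fin (r + 1), ∃ i : Fin n, Bᵀ i = (e j : Fin m → ℝ) := fun j =>
    hb_sub (e j).2
  choose f hfe using hf
  -- column-selection matrix
  set E : Matrix (Fin n) (Fin (r + 1)) ℝ := Matrix.of fun i j => if f j = i then 1 else 0
    with hE
  have hME : ∀ M : Matrix (Fin m) (Fin n) ℝ, (M * E)ᵀ = fun j => Mᵀ (f j) := by
    intro M
    funext j i
    simp [Matrix.transpose_apply, Matrix.mul_apply, hE]
  -- full rank of selected columns at limit
  have hBE : ((B * E)ᵀ).rank = r + 1 := by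
    have : LinearIndependent ℝ ((B * E)ᵀ) := by
      rw [hME]
      have : (fun j : Fin (r+1) => Bᵀ (f j)) = fun j => ((e j : b) : Fin m → ℝ) := by
        funext j; exact hfe j
      rw [this]
      exact he_li
    have h := this.rank_matrix; rw [Fintype.card_fin] at h; exact h
  have hGram : ((B * E)ᵀ * (B * E)).rank = r + 1 := by
    rw [Matrix.rank_transpose_mul_self, ← Matrix.rank_transpose, hBE]
  have hdet : ((B * E)ᵀ * (B * E)).det ≠ 0 := det_ne_zero_of_rank_eq _ hGram
  -- continuity of the Gram determinant
  have hcont : Continuous (fun M : Matrix (Fin m) (Fin n) ℝ => ((M * E)ᵀ * (M * E)).det) := by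
    have h1 : Continuous (fun M : Matrix (Fin m) (Fin n) ℝ => M * E) :=
      continuous_id.matrix_mul continuous_const
    exact (h1.matrix_transpose.matrix_mul h1).matrix_det
  have htend : Tendsto (fun t => ((A t * E)ᵀ * (A t * E)).det) atTop
      (nhds (((B * E)ᵀ * (B * E)).det)) := (hcont.tendsto B).comp h
  have := htend.eventually_ne hdet
  obtain ⟨t, ht⟩ := this.exists
  -- full rank of selected columns along the sequence: contradiction
  have h1 : ((A t * E)ᵀ * (A t * E)).rank = r + 1 :=
    by simpa using Matrix.rank_of_isUnit _ ((Matrix.isUnit_iff_isUnit_det _).2 (Ne.isUnit ht))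
  have h2 : ((A t * E)ᵀ * (A t * E)).rank ≤ (A t).rank := by
    calc ((A t * E)ᵀ * (A t * E)).rank = (A t * E).rank := by
          rw [Matrix.rank_transpose_mul_self]
      _ ≤ (A t).rank := Matrix.rank_mul_le_left _ _
  have := hA t
  omega

theorem mbi_limit_is_coordinatewise_minimum {p m k : ℕ} (s : Fin p → ℕ)
    (H : Matrix (Fin m) (Fin k) ℝ) (G : ∀ j : Fin p, Matrix (Fin (s j)) (Fin k) ℝ)
    (r : Fin p → ℕ)
    (φ : (∀ j : Fin p, Matrix (Fin m) (Fin (s j)) ℝ) → ℝ)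
    (hφ : ∀ P, φ P = frobSq (H - ∑ j, P j * G j))
    (P : ℕ → ∀ j : Fin p, Matrix (Fin m) (Fin (s j)) ℝ)
    (hrank : ∀ q j, (P q j).rank ≤ r j)
    (hMBI : ∀ (q : ℕ) (j : Fin p) (Y : Matrix (Fin m) (Fin (s j)) ℝ), Y.rank ≤ r j →
      φ (P (q + 1)) ≤ φ (Function.update (P q) j Y))
    (qs : ℕ → ℕ) (hqs : StrictMono qs)
    (Pstar : ∀ j : Fin p, Matrix (Fin m) (Fin (s j)) ℝ)
    (hconv : ∀ (j : Fin p) (i : Fin m) (l : Fin (s j)),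
      Tendsto (fun t => P (qs t) j i l) atTop (nhds (Pstar j i l))) :
    (∀ j, (Pstar j).rank ≤ r j) ∧
      ∀ (j : Fin p) (Y : Matrix (Fin m) (Fin (s j)) ℝ), Y.rank ≤ r j →
        φ Pstar ≤ φ (Function.update Pstar j Y) := by
  classical
  -- continuity of φ
  have hφeq : φ = fun Q => frobSq (H - ∑ j, Q j * G j) := funext hφ
  have hφcont : Continuous φ := by
    rw [hφeq]
    unfold frobSq
    have h0 : Continuous fun Q : ∀ j : Fin p, Matrix (Fin m) (Fin (s j)) ℝ =>
        H - ∑ j, Q j * G j :=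
      continuous_const.sub (continuous_finset_sum _ fun j _ =>
        (continuous_apply j).matrix_mul continuous_const)
    exact (h0.matrix_mul h0.matrix_transpose).matrix_trace
  -- convergence of the tuple
  have htup : Tendsto (fun t => P (qs t)) atTop (nhds Pstar) :=
    tendsto_pi_nhds.2 fun j => tendsto_pi_nhds.2 fun i =>
      tendsto_pi_nhds.2 fun l => hconv j i l
  constructor
  · intro j
    exact rank_le_of_tendsto (fun t => P (qs t) j) (Pstar j) (fun t => hrank _ j)
      (tendsto_pi_nhds.2 fun i => tendsto_pi_nhds.2 fun l => hconv j i l)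
  · intro j Y hY
    -- φ is nonincreasing along the sequence
    have hanti : Antitone fun q => φ (P q) := by
      apply antitone_nat_of_succ_le
      intro q
      have := hMBI q j (P q j) (hrank q j)
      rwa [Function.update_eq_self] at this
    have hsub : Tendsto (fun t => φ (P (qs t))) atTop (nhds (φ Pstar)) :=
      (hφcont.tendsto Pstar).comp htup
    have hLle : ∀ q, φ Pstar ≤ φ (P q) := by
      intro q
      refine le_of_tendsto hsub ?_
      filter_upwards [eventually_ge_atTop q] with t ht
      exact hanti (ht.trans hqs.le_apply)
    -- convergence of the updated tuple
    have hupdt : Tendsto (fun t => Function.update (P (qs t)) j Y) atTop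
        (nhds (Function.update Pstar j Y)) := by
      refine tendsto_pi_nhds.2 fun j' => ?_
      rcases eq_or_ne j' j with rfl | hne
      · simp only [Function.update_self]
        exact tendsto_const_nhds
      · simp only [Function.update_of_ne hne]
        exact tendsto_pi_nhds.2 fun i => tendsto_pi_nhds.2 fun l => hconv j' i l
    have hupd : Tendsto (fun t => φ (Function.update (P (qs t)) j Y)) atTop
        (nhds (φ (Function.update Pstar j Y))) :=
      (hφcont.tendsto _).comp hupdt
    exact ge_of_tendsto' hupd fun t => (hLle (qs t + 1)).trans (hMBI (qs t) j Y hY)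
end

section
/- Let p ∈ ℕ, for each j ∈ {1,…,p} let V_j = ℝ^{a_j×b_j} be a real matrix space and R_j ⊆ V_j a closed subset, and let φ : V_1 × ⋯ × V_p → ℝ be continuous. Let (P^{(q)})_{q∈ℕ} be a sequence with P^{(q)}_j ∈ R_j for all q and j, satisfying the maximum-block-improvement property: for every q, every index j, and every Y ∈ R_j, φ(P^{(q+1)}) ≤ φ(P^{(q)}_1,…,P^{(q)}_{j−1}, Y, P^{(q)}_{j+1},…,P^{(q)}_p). If a subsequence (P^{(q_s)}) converges to a tuple P* = (P*_1,…,P*_p), then P*_j ∈ R_j for every j, and for every j and every Y ∈ R_j, φ(P*) ≤ φ(P*_1,…,P*_{j−1}, Y, P*_{j+1},…,P*_p); that is, every limit point of the sequence is a coordinate-wise minimum of φ on R_1 × ⋯ × R_p. -/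
open Filter

theorem mbi_limit_is_coordinatewise_minimum_general {p : ℕ} (a b : Fin p → ℕ)
    (R : ∀ j : Fin p, Set (Matrix (Fin (a j)) (Fin (b j)) ℝ))
    (hR : ∀ j, IsClosed (R j))
    (φ : (∀ j : Fin p, Matrix (Fin (a j)) (Fin (b j)) ℝ) → ℝ)
    (hφ : Continuous φ)
    (P : ℕ → ∀ j : Fin p, Matrix (Fin (a j)) (Fin (b j)) ℝ)
    (hmem : ∀ q j, P q j ∈ R j)
    (hMBI : ∀ (q : ℕ) (j : Fin p) (Y : Matrix (Fin (a j)) (Fin (b j)) ℝ), Y ∈ R j →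
      φ (P (q + 1)) ≤ φ (Function.update (P q) j Y))
    (qs : ℕ → ℕ) (hqs : StrictMono qs)
    (Pstar : ∀ j : Fin p, Matrix (Fin (a j)) (Fin (b j)) ℝ)
    (hconv : Tendsto (fun t => P (qs t)) atTop (nhds Pstar)) :
    (∀ j, Pstar j ∈ R j) ∧
      ∀ (j : Fin p) (Y : Matrix (Fin (a j)) (Fin (b j)) ℝ), Y ∈ R j →
        φ Pstar ≤ φ (Function.update Pstar j Y) := by
  constructor
  · intro j
    have hconvj : Tendsto (fun t => P (qs t) j) atTop (nhds (Pstar j)) :=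
      ((continuous_apply j).tendsto _).comp hconv
    exact (hR j).mem_of_tendsto hconvj (Eventually.of_forall fun t => hmem (qs t) j)
  · intro j Y hY
    -- the sequence φ (P q) is antitone
    have anti : Antitone fun q => φ (P q) := by
      apply antitone_nat_of_succ_le
      intro n
      have := hMBI n j (P n j) (hmem n j)
      simpa [Function.update_eq_self] using this
    -- continuity of updating coordinate j
    have hcont : Continuous fun x : (∀ j : Fin p, Matrix (Fin (a j)) (Fin (b j)) ℝ) =>
        Function.update x j Y := by
      apply continuous_pi
      intro k
      by_cases hk : k = j
      · subst hk; simpa [Function.update_self] using continuous_const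
      · simpa [Function.update_of_ne hk] using continuous_apply k
    have h1 : Tendsto (fun t => φ (Function.update (P (qs t)) j Y)) atTop
        (nhds (φ (Function.update Pstar j Y))) :=
      ((hφ.comp hcont).tendsto _).comp hconv
    have h2 : Tendsto (fun t => φ (P (qs (t + 1)))) atTop (nhds (φ Pstar)) :=
      (hφ.tendsto _).comp (hconv.comp (tendsto_add_atTop_nat 1))
    refine le_of_tendsto_of_tendsto' h2 h1 fun t => ?_
    have hle : qs t + 1 ≤ qs (t + 1) := hqs (Nat.lt_succ_self t)
    exact le_trans (anti hle) (hMBI (qs t) j Y hY)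
end
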